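/- arXiv:1501.00509 — 2 statements merged into one kernel-verified Lean document; each statement's English description precedes it below -/
import Mathlib

section
/- Let T(z) = Σ_{n≥1} n^{n-2} z^n/n!. Then the second derivative satisfies T''(z)·(1 − z·T'(z)) = (T'(z))^2 as formal power series. -/
/-!
Write `A = T'` and `R = z A`. Since `R' = A + z A'`, the identity is equivalent to `A' = A R'`
(that is, to `A = exp R`). With `A = Σ (n+1)^(n-1) z^n/n!` and `R' = Σ (n+1)^n z^n/n!`, comparing
coefficients of `z^n` turns this into Abel's identity
`Σ_{i+j=n} C(n,i) (i+1)^(i-1) (j+1)^j = (n+2)^n`.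
That identity is the value at `X = 1` of the polynomial identity
`Σ_{i+j=n} a_i (X+j)^j/j! = (X+n+1)^n/n!`, where `a_i = (i+1)^(i-1)/i!`, proved by induction on `n`:
the derivative of each side is the previous side shifted by one, and both sides vanish at
`X = -(n+2)`, where the left side becomes an `(n+1)`-st finite difference of a polynomial of
degree `n`.
-/

open Finset
open scoped Nat

theorem Polynomial.eq_of_derivative_eq_of_eval_eq {R : Type*} [Ring R] [IsAddTorsionFree R]
    {p q : Polynomial R} (h : derivative p = derivative q) (a : R) (ha : p.eval a = q.eval a) :
    p = q := by
  have hc := eq_C_of_derivative_eq_zero (by rw [map_sub, h, sub_self] : derivative (p - q) = 0)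
  have h0 : (p - q).coeff 0 = 0 := by
    simpa [ha] using (congrArg (eval a) hc).symm
  rw [h0, C_0] at hc
  exact sub_eq_zero.mp hc

section Abel

open Polynomial

variable {K : Type*} [Field K] [CharZero K]

theorem sum_antidiagonal_neg_one_pow_mul_pow_div_factorial {m N : ℕ} (hm : m < N) (c : K) :
    ∑ p ∈ antidiagonal N, (-1) ^ p.2 * (c + p.1) ^ m / (p.1 ! * p.2 !) = 0 := by
  have h := congrFun (fwdDiff_iter_pow_eq_zero_of_lt (R := K) hm) c
  rw [fwdDiff_iter_eq_sum_shift, Pi.zero_apply] at h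
  rw [Nat.sum_antidiagonal_eq_sum_range_succ_mk, ← mul_eq_zero_of_right (N ! : K)⁻¹ h, mul_sum]
  refine sum_congr rfl fun k hk => ?_
  have hk : k ≤ N := Nat.lt_succ_iff.mp (mem_range.mp hk)
  rw [zsmul_eq_mul, nsmul_one]
  push_cast
  rw [Nat.cast_choose K hk]
  field_simp
  exact (mul_div_mul_right _ _ (Nat.cast_ne_zero.mpr N.factorial_ne_zero)).symm

noncomputable def abelSum (a : ℕ → K) (n : ℕ) : K[X] :=
  ∑ p ∈ antidiagonal n, C (a p.1 / p.2 !) * (X + C (p.2 : K)) ^ p.2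

theorem derivative_C_div_factorial_mul_pow_succ (c y : K) (m : ℕ) :
    derivative (C (c / (m + 1)!) * (X + C (y + 1)) ^ (m + 1)) =
      (C (c / m !) * (X + C y) ^ m).comp (X + C 1) := by
  rw [derivative_C_mul, derivative_pow_succ, derivative_add, derivative_X, derivative_C, add_zero,
    mul_one, mul_comp, C_comp, pow_comp, add_comp, X_comp, C_comp, add_assoc, ← C_add, add_comm 1 y,
    ← mul_assoc, ← C_mul, Nat.factorial_succ]
  congr 2
  push_cast
  field_simp

theorem derivative_abelSum_succ (a : ℕ → K) (n : ℕ) :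
    derivative (abelSum a (n + 1)) = (abelSum a n).comp (X + C 1) := by
  rw [abelSum, abelSum, Nat.sum_antidiagonal_succ', map_add, map_sum, Polynomial.sum_comp]
  simp only [pow_zero, mul_one, derivative_C, zero_add, Nat.cast_succ,
    derivative_C_div_factorial_mul_pow_succ]

noncomputable def treeDerivCoeff (n : ℕ) : K := ((n : K) + 1) ^ (n - 1) / n !

theorem eval_abelSum_treeDerivCoeff_succ (n : ℕ) :
    (abelSum (treeDerivCoeff (K := K)) (n + 1)).eval (-((n : K) + 2)) = 0 := by
  rw [abelSum, eval_finsetSum,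
    ← sum_antidiagonal_neg_one_pow_mul_pow_div_factorial (Nat.lt_succ_self n) (1 : K)]
  refine sum_congr rfl fun ⟨i, j⟩ hij => ?_
  have hij : i + j = n + 1 := mem_antidiagonal.mp hij
  have hbase : -((n : K) + 2) + j = -(1 + i) := by
    linear_combination (by exact_mod_cast hij : (i : K) + j = n + 1)
  have hpow : ((i : K) + 1) ^ (i - 1) * (1 + i) ^ j = (1 + i) ^ n := by
    rcases i with _ | i
    · simp
    · rw [add_comm (1 : K), ← pow_add]
      congr 1
      omega
  simp only [eval_mul, eval_C, eval_pow, eval_add, eval_X, hbase, treeDerivCoeff]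
  rw [neg_pow]
  field_simp
  rw [hpow]

theorem abelSum_treeDerivCoeff (n : ℕ) :
    abelSum (treeDerivCoeff (K := K)) n = C (1 / n ! : K) * (X + C ((n : K) + 1)) ^ n := by
  induction n with
  | zero => simp [abelSum, treeDerivCoeff]
  | succ n ih =>
    refine eq_of_derivative_eq_of_eval_eq ?_ (-((n : K) + 2)) ?_
    · rw [derivative_abelSum_succ, ih, Nat.cast_succ, derivative_C_div_factorial_mul_pow_succ]
    · rw [eval_abelSum_treeDerivCoeff_succ, eval_mul, eval_pow, eval_add, eval_X, eval_C, eval_C,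
        show -((n : K) + 2) + (((n + 1 : ℕ) : K) + 1) = 0 by push_cast; ring,
        zero_pow n.succ_ne_zero, mul_zero]

theorem sum_antidiagonal_treeDerivCoeff_mul (n : ℕ) :
    ∑ p ∈ antidiagonal n, treeDerivCoeff (K := K) p.1 * (((p.2 : K) + 1) ^ p.2 / p.2 !) =
      ((n : K) + 2) ^ n / n ! := by
  have h := congrArg (eval 1) (abelSum_treeDerivCoeff (K := K) n)
  simp only [abelSum, eval_finsetSum, eval_mul, eval_C, eval_pow, eval_add, eval_X] at h
  convert h using 1
  · refine sum_congr rfl fun p _ => ?_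
    ring
  · ring

end Abel

open PowerSeries

/-- The EGF of labelled trees, `T(z) = Σ_{n≥1} n^{n-2} z^n/n!`. -/
noncomputable def Ttree : PowerSeries ℝ :=
  PowerSeries.mk fun n => if n = 0 then 0 else (n : ℝ) ^ (n - 2) / (Nat.factorial n)

theorem coeff_derivative_Ttree (n : ℕ) : coeff n (d⁄dX ℝ Ttree) = treeDerivCoeff n := by
  rw [coeff_derivative, Ttree, coeff_mk, if_neg n.succ_ne_zero, treeDerivCoeff,
    Nat.factorial_succ, show n + 1 - 2 = n - 1 by omega]
  push_cast
  field_simp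

theorem coeff_derivative_derivative_Ttree (n : ℕ) :
    coeff n (d⁄dX ℝ (d⁄dX ℝ Ttree)) = ((n : ℝ) + 2) ^ n / n ! := by
  rw [coeff_derivative, coeff_derivative_Ttree, treeDerivCoeff, Nat.factorial_succ,
    Nat.add_sub_cancel]
  push_cast
  field_simp
  ring

theorem coeff_derivative_X_mul_derivative_Ttree (n : ℕ) :
    coeff n (d⁄dX ℝ (X * d⁄dX ℝ Ttree)) = ((n : ℝ) + 1) ^ n / n ! := by
  rw [coeff_derivative, coeff_succ_X_mul, coeff_derivative_Ttree, treeDerivCoeff]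
  rcases n with _ | n
  · simp
  · rw [div_mul_eq_mul_div, pow_sub_one_mul n.succ_ne_zero]

theorem derivative_derivative_Ttree :
    d⁄dX ℝ (d⁄dX ℝ Ttree) = d⁄dX ℝ Ttree * d⁄dX ℝ (X * d⁄dX ℝ Ttree) := by
  ext n
  rw [coeff_mul, coeff_derivative_derivative_Ttree, ← sum_antidiagonal_treeDerivCoeff_mul]
  simp only [coeff_derivative_Ttree, coeff_derivative_X_mul_derivative_Ttree]

/-- `T''(z)·(1 − z·T'(z)) = (T'(z))²` as formal power series. -/
theorem stmt_6 :
    PowerSeries.derivativeFun (PowerSeries.derivativeFun Ttree) *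
        (1 - PowerSeries.X * PowerSeries.derivativeFun Ttree)
      = (PowerSeries.derivativeFun Ttree) ^ 2 := by
  change d⁄dX ℝ (d⁄dX ℝ Ttree) * (1 - X * d⁄dX ℝ Ttree) = (d⁄dX ℝ Ttree) ^ 2
  have h := derivative_derivative_Ttree
  rw [Derivation.leibniz, derivative_X, smul_eq_mul, smul_eq_mul] at h
  linear_combination h
end

section
/- Define T_1(z) = z + Σ_{n≥1} n^n z^{n+1}/(n+1)!. Then T_1(z) = 1 − 1/T'(z) as formal power series, where T(z) = Σ_{n≥1} n^{n-2} z^n/n! is the exponential generating function of labelled trees. -/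
/-!
The Abel polynomials `A₀ = 1`, `Aₙ(x) = x (x + n)^(n-1)` form a sequence of binomial type:
`Aₙ(x + y) = ∑ (n choose k) A_k(x) A_{n-k}(y)`. Both sides have `y`-derivative `n` times the same
identity one degree lower with `y` shifted by one, because `Aₙ' = n A_{n-1}(· + 1)`, and they agree
at `y = 0`. Hence the exponential generating functions `E_x = ∑ Aₙ(x) zⁿ/n!` satisfy
`E_x E_y = E_{x+y}`. Since `T' = E_1`, `1 - T₁ = E_{-1}` and `E_0 = 1`, we get `(1 - T₁) T' = 1`.
-/

open PowerSeries

/-- `T_1(z) = z + Σ_{n≥1} n^n z^{n+1}/(n+1)!`, i.e. coefficient of `z^m` (m ≥ 1)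
is `(m-1)^{m-1}/m!` (with `0^0 = 1`). -/
noncomputable def Tone : PowerSeries ℝ :=
  PowerSeries.mk fun n => if n = 0 then 0 else ((n : ℝ) - 1) ^ (n - 1) / (Nat.factorial n)

open Finset Nat

namespace Polynomial

variable {R : Type*} [CommRing R]

noncomputable def abel : ℕ → R[X]
  | 0 => 1
  | n + 1 => X * (X + C ((n : R) + 1)) ^ n

@[simp] lemma abel_zero : (abel 0 : R[X]) = 1 := rfl

lemma abel_succ (n : ℕ) : (abel (n + 1) : R[X]) = X * (X + C ((n : R) + 1)) ^ n := rfl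

lemma eval_zero_abel_succ (n : ℕ) : (abel (n + 1) : R[X]).eval 0 = 0 := by
  simp [abel_succ]

lemma eval_one_abel (n : ℕ) : (abel n).eval (1 : R) = ((n : R) + 1) ^ (n - 1) := by
  cases n with
  | zero => simp
  | succ n =>
    simp only [abel_succ, eval_mul, eval_pow, eval_add, eval_X, eval_C, one_mul,
      Nat.add_sub_cancel, Nat.cast_add, Nat.cast_one]
    ring

lemma eval_neg_one_abel_succ (n : ℕ) : (abel (n + 1)).eval (-1 : R) = -(n : R) ^ n := by
  simp [abel_succ]

lemma derivative_abel_succ (n : ℕ) :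
    derivative (abel (n + 1) : R[X]) = C ((n : R) + 1) * (abel n).comp (X + 1) := by
  cases n with
  | zero => simp [abel_succ]
  | succ n =>
    simp only [abel_succ, derivative_mul, derivative_X, derivative_pow, derivative_add,
      derivative_C, mul_comp, pow_comp, add_comp, X_comp, C_comp, Nat.add_sub_cancel]
    simp only [map_add, map_natCast, map_one, Nat.cast_add, Nat.cast_one]
    ring

lemma derivative_abel_succ_comp_X_add_C (n : ℕ) (x : R) :
    derivative ((abel (n + 1) : R[X]).comp (X + C x)) =
      C ((n : R) + 1) * ((abel n).comp (X + C x)).comp (X + 1) := by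
  rw [derivative_comp, derivative_abel_succ, mul_comp, C_comp, comp_assoc, comp_assoc]
  simp only [derivative_add, derivative_X, derivative_C, add_zero, one_mul, add_comp, X_comp,
    C_comp, one_comp, add_right_comm]

lemma derivative_sum_choose_mul_abel (n : ℕ) (a : ℕ → R) :
    derivative (∑ p ∈ antidiagonal (n + 1), C (((n + 1).choose p.1 : R) * a p.1) * abel p.2) =
      C ((n : R) + 1) *
        (∑ p ∈ antidiagonal n, C ((n.choose p.1 : R) * a p.1) * abel p.2).comp (X + 1) := by
  rw [Nat.sum_antidiagonal_succ', derivative_add, derivative_sum, sum_comp, mul_sum]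
  simp only [abel_zero, mul_one, derivative_C, zero_add, derivative_C_mul, derivative_abel_succ,
    mul_comp, C_comp]
  refine sum_congr rfl fun ⟨i, j⟩ hij => ?_
  obtain rfl : i + j = n := HasAntidiagonal.mem_antidiagonal.mp hij
  have hchoose : ((i + j + 1).choose i : R) * ((j : R) + 1) =
      (i + j).choose i * ((↑(i + j) : R) + 1) := by
    have h := choose_mul_succ_eq (i + j) i
    rw [show i + j + 1 - i = j + 1 by omega] at h
    exact_mod_cast congrArg (Nat.cast (R := R)) h.symm
  rw [← mul_assoc, ← mul_assoc, ← C_mul, ← C_mul]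
  congr 2
  linear_combination a i * hchoose

theorem eq_of_derivative_eq_of_eval_eq_s7 [IsAddTorsionFree R] {p q : R[X]} (a : R)
    (hd : derivative p = derivative q) (he : p.eval a = q.eval a) : p = q := by
  have h := eq_C_of_derivative_eq_zero (p := p - q) (by rw [derivative_sub, hd, sub_self])
  have h0 : (p - q).coeff 0 = 0 := by
    simpa [he] using (congrArg (eval a) h).symm
  rwa [h0, map_zero, sub_eq_zero] at h

theorem abel_comp_X_add_C [IsAddTorsionFree R] (x : R) (n : ℕ) :
    (abel n).comp (X + C x) =
      ∑ p ∈ antidiagonal n, C ((n.choose p.1 : R) * (abel p.1).eval x) * abel p.2 := by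
  induction n with
  | zero => simp
  | succ n ih =>
    refine eq_of_derivative_eq_of_eval_eq_s7 0 ?_ ?_
    · rw [derivative_abel_succ_comp_X_add_C, ih]
      exact (derivative_sum_choose_mul_abel n fun i => (abel i).eval x).symm
    · rw [Nat.sum_antidiagonal_succ', eval_add, eval_finsetSum]
      simp [eval_zero_abel_succ]

theorem eval_add_abel [IsAddTorsionFree R] (x y : R) (n : ℕ) :
    (abel n).eval (x + y) =
      ∑ p ∈ antidiagonal n, n.choose p.1 * (abel p.1).eval x * (abel p.2).eval y := by
  simpa [eval_finsetSum, add_comm y x] using congrArg (eval y) (abel_comp_X_add_C x n)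

end Polynomial

namespace PowerSeries

variable {K : Type*} [Field K] [CharZero K]

noncomputable def abelEGF (x : K) : K⟦X⟧ := mk fun n => (Polynomial.abel n).eval x / n !

theorem abelEGF_add (x y : K) : abelEGF (x + y) = abelEGF x * abelEGF y := by
  ext n
  rw [coeff_mul, abelEGF, coeff_mk, Polynomial.eval_add_abel, sum_div]
  refine sum_congr rfl fun ⟨i, j⟩ hij => ?_
  obtain rfl : i + j = n := HasAntidiagonal.mem_antidiagonal.mp hij
  have hfact : ((i + j).choose i : K) * i ! * j ! = (i + j) ! := by
    rw [choose_symm_add]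
    exact_mod_cast add_choose_mul_factorial_mul_factorial i j
  have hchoose : ((i + j).choose i : K) ≠ 0 := by
    exact_mod_cast (choose_pos (le_add_right i j)).ne'
  simp only [abelEGF, coeff_mk]
  rw [← hfact]
  field_simp

theorem abelEGF_zero : abelEGF (0 : K) = 1 := by
  ext (_ | n) <;> simp [abelEGF, Polynomial.eval_zero_abel_succ, coeff_one]

end PowerSeries

lemma derivative_Ttree : derivative ℝ Ttree = abelEGF 1 := by
  ext n
  rw [coeff_derivative, Ttree, coeff_mk, abelEGF, coeff_mk, if_neg n.succ_ne_zero,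
    Polynomial.eval_one_abel, show n + 1 - 2 = n - 1 by omega, factorial_succ]
  push_cast
  field_simp

lemma one_sub_Tone : 1 - Tone = abelEGF (-1) := by
  ext (_ | n)
  · simp [Tone, abelEGF]
  · rw [map_sub, coeff_one, if_neg n.succ_ne_zero, Tone, abelEGF, coeff_mk, coeff_mk,
      if_neg n.succ_ne_zero, Polynomial.eval_neg_one_abel_succ, Nat.add_sub_cancel]
    push_cast
    ring

/-- `T_1(z) = 1 − 1/T'(z)` as formal power series. -/
theorem stmt_7 : Tone = 1 - (PowerSeries.derivativeFun Ttree)⁻¹ := by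
  change Tone = 1 - (derivative ℝ Ttree)⁻¹
  have hmul : (1 - Tone) * derivative ℝ Ttree = 1 := by
    rw [one_sub_Tone, derivative_Ttree, ← abelEGF_add, neg_add_cancel, abelEGF_zero]
  have hunit : constantCoeff (derivative ℝ Ttree) ≠ 0 := by simp [derivative_Ttree, abelEGF]
  rw [← (eq_inv_iff_mul_eq_one hunit).2 hmul, sub_sub_cancel]
end
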